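/- For every n < ω, if κ is a C(n)-extendible cardinal, then κ belongs to C(n+2), i.e., V_κ is a Σ_{n+2}-elementary substructure of V. -/

import Mathlib

noncomputable section
open Classical

universe u

namespace ZFCMeta

/-! ### Finitary formulas of the language of set theory, with de Bruijn variables. -/

/-- Formulas of the (finitary, first-order) language of set theory.
Variables are natural-number indices; `ex`/`all` bind variable `0` and shift
the remaining variables, while `bex k φ`/`ball k φ` are the bounded quantifiers
`∃ x ∈ v k, φ` and `∀ x ∈ v k, φ` (again binding variable `0`). -/
inductive SetFml : Type
  | mem : ℕ → ℕ → SetFml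
  | eq : ℕ → ℕ → SetFml
  | not : SetFml → SetFml
  | and : SetFml → SetFml → SetFml
  | or : SetFml → SetFml → SetFml
  | ex : SetFml → SetFml
  | all : SetFml → SetFml
  | bex : ℕ → SetFml → SetFml
  | ball : ℕ → SetFml → SetFml

/-- Extend a variable assignment by a new value for variable `0`. -/
def push (x : ZFSet.{u}) (v : ℕ → ZFSet.{u}) : ℕ → ZFSet.{u} :=
  fun n => Nat.casesOn n x v

/-- Satisfaction of a set-theoretic formula, with all unbounded quantifiers
relativized to the class `M`. -/
def SetFml.SatIn (M : ZFSet.{u} → Prop) : SetFml → (ℕ → ZFSet.{u}) → Prop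
  | .mem i j, v => v i ∈ v j
  | .eq i j, v => v i = v j
  | .not φ, v => ¬ φ.SatIn M v
  | .and φ ψ, v => φ.SatIn M v ∧ ψ.SatIn M v
  | .or φ ψ, v => φ.SatIn M v ∨ ψ.SatIn M v
  | .ex φ, v => ∃ x, M x ∧ φ.SatIn M (push x v)
  | .all φ, v => ∀ x, M x → φ.SatIn M (push x v)
  | .bex k φ, v => ∃ x, x ∈ v k ∧ φ.SatIn M (push x v)
  | .ball k φ, v => ∀ x, x ∈ v k → φ.SatIn M (push x v)

/-- Satisfaction in the universe `V` of all sets. -/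
def SetFml.Sat (φ : SetFml) (v : ℕ → ZFSet.{u}) : Prop :=
  φ.SatIn (fun _ => True) v

/-! ### The Lévy hierarchy -/

/-- `Δ₀` (= `Σ₀` = `Π₀`) formulas: all quantifiers are bounded. -/
inductive IsDelta0 : SetFml → Prop
  | mem (i j : ℕ) : IsDelta0 (.mem i j)
  | eq (i j : ℕ) : IsDelta0 (.eq i j)
  | not {φ} : IsDelta0 φ → IsDelta0 (.not φ)
  | and {φ ψ} : IsDelta0 φ → IsDelta0 ψ → IsDelta0 (.and φ ψ)
  | or {φ ψ} : IsDelta0 φ → IsDelta0 ψ → IsDelta0 (.or φ ψ)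
  | bex (k : ℕ) {φ} : IsDelta0 φ → IsDelta0 (.bex k φ)
  | ball (k : ℕ) {φ} : IsDelta0 φ → IsDelta0 (.ball k φ)

/-- `m`-fold existential quantification. -/
def iterEx : ℕ → SetFml → SetFml
  | 0, φ => φ
  | m + 1, φ => .ex (iterEx m φ)

/-- `m`-fold universal quantification. -/
def iterAll : ℕ → SetFml → SetFml
  | 0, φ => φ
  | m + 1, φ => .all (iterAll m φ)

mutual
  /-- `Σₙ` formulas of the Lévy hierarchy. -/
  def IsSigma : ℕ → SetFml → Prop
    | 0, φ => IsDelta0 φ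
    | n + 1, φ => ∃ (m : ℕ) (ψ : SetFml), IsPi n ψ ∧ φ = iterEx m ψ
  /-- `Πₙ` formulas of the Lévy hierarchy. -/
  def IsPi : ℕ → SetFml → Prop
    | 0, φ => IsDelta0 φ
    | n + 1, φ => ∃ (m : ℕ) (ψ : SetFml), IsSigma n ψ ∧ φ = iterAll m ψ
end

/-! ### Definable classes -/

/-- The formula `φ`, with the set `p` of parameters (assigned to every variable
except variable `0`), defines the class `C`. -/
def DefinesClass (φ : SetFml) (p : ZFSet.{u}) (C : ZFSet.{u} → Prop) : Prop :=
  ∀ x, C x ↔ φ.Sat (fun n => if n = 0 then x else p)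

/-- The class `C` is **Σₙ**-definable (boldface: with a set of parameters). -/
def SigmaDefinable (n : ℕ) (C : ZFSet.{u} → Prop) : Prop :=
  ∃ (φ : SetFml) (p : ZFSet.{u}), IsSigma n φ ∧ DefinesClass φ p C

/-- The class `C` is **Πₙ**-definable (boldface: with a set of parameters). -/
def PiDefinable (n : ℕ) (C : ZFSet.{u} → Prop) : Prop :=
  ∃ (φ : SetFml) (p : ZFSet.{u}), IsPi n φ ∧ DefinesClass φ p C

/-- A class is proper if it is not the extension of a set. -/
def ProperClass (C : ZFSet.{u} → Prop) : Prop :=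
  ¬ ∃ s : ZFSet.{u}, ∀ x, C x ↔ x ∈ s

/-! ### Basic coded set theory -/

/-- A ZFC set is an ordinal iff it is transitive and all its members are transitive. -/
def IsOrd (x : ZFSet.{u}) : Prop :=
  x.IsTransitive ∧ ∀ y ∈ x, ZFSet.IsTransitive y

/-- Application of a ZFC-coded function (graph of Kuratowski pairs) to an argument. -/
def ZApp (f a : ZFSet.{u}) : ZFSet.{u} :=
  ZFSet.sUnion ((ZFSet.sUnion (ZFSet.sUnion f)).sep fun b => ZFSet.pair a b ∈ f)

/-- `f` is a ZFC-coded function with domain `α` (and arbitrary values). -/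
def IsFuncDom (α f : ZFSet.{u}) : Prop :=
  (∀ p ∈ f, ∃ a ∈ α, ∃ b, p = ZFSet.pair a b) ∧ ∀ a ∈ α, ∃! b, ZFSet.pair a b ∈ f

/-- First projection of a Kuratowski pair. -/
def π₁ (p : ZFSet.{u}) : ZFSet.{u} := ZFSet.sUnion (ZFSet.sInter p)

/-- Second projection of a Kuratowski pair. -/
def π₂ (p : ZFSet.{u}) : ZFSet.{u} :=
  if ZFSet.sUnion p = ZFSet.sInter p then π₁ p
  else ZFSet.sUnion ((ZFSet.sUnion p).sep fun x => x ∉ ZFSet.sInter p)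

/-- Domain of a coded function. -/
def ZDom (f : ZFSet.{u}) : ZFSet.{u} :=
  (ZFSet.sUnion (ZFSet.sUnion f)).sep fun a => ∃ b, ZFSet.pair a b ∈ f

/-- Range of a coded function. -/
def ZRan (f : ZFSet.{u}) : ZFSet.{u} :=
  (ZFSet.sUnion (ZFSet.sUnion f)).sep fun b => ∃ a, ZFSet.pair a b ∈ f

/-! ### Transitive classes, elementary embeddings of the universe, large cardinals -/

/-- A class `M` is transitive. -/
def IsTransClass (M : ZFSet.{u} → Prop) : Prop :=
  ∀ x y, M x → y ∈ x → M y

/-- `j` is an elementary embedding of the set-theoretic universe `V` into the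
class `M`: it takes values in `M` and preserves and reflects satisfaction of all
formulas of the language of set theory (relativized to `M` on the target side). -/
def IsElemEmbUniv (M : ZFSet.{u} → Prop) (j : ZFSet.{u} → ZFSet.{u}) : Prop :=
  (∀ x, M (j x)) ∧
    ∀ (φ : SetFml) (v : ℕ → ZFSet.{u}), φ.Sat v ↔ φ.SatIn M (fun n => j (v n))

/-- `j` has critical point (the rank of) the ordinal `k`: it fixes all ordinals of
smaller rank and moves `k`. -/
def IsCritPoint (j : ZFSet.{u} → ZFSet.{u}) (k : ZFSet.{u}) : Prop :=
  IsOrd k ∧ (∀ o : ZFSet.{u}, IsOrd o → o.rank < k.rank → j o = o) ∧ j k ≠ k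

/-- The class `M` is closed under sequences of length `≤ lam` (hence in particular
under sequences of length less than a limit `lam`): any coded function whose domain
is an ordinal of rank at most `lam` and whose values lie in `M` belongs to `M`. -/
def SeqClosed (M : ZFSet.{u} → Prop) (lam : Ordinal.{u}) : Prop :=
  ∀ α f : ZFSet.{u}, IsOrd α → α.rank ≤ lam → IsFuncDom α f →
    (∀ a ∈ α, M (ZApp f a)) → M f

/-- The class `M` is closed under sequences of length `< lam`. -/
def SeqClosedLT (M : ZFSet.{u} → Prop) (lam : Ordinal.{u}) : Prop :=
  ∀ α f : ZFSet.{u}, IsOrd α → α.rank < lam → IsFuncDom α f →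
    (∀ a ∈ α, M (ZApp f a)) → M f

/-- The ordinal `κ` is an infinite cardinal. -/
def IsInfCardO (κ : Ordinal.{u}) : Prop :=
  ∃ c : Cardinal.{u}, Cardinal.aleph0 ≤ c ∧ c.ord = κ

/-- `κ` is a supercompact cardinal: for every ordinal `lam` there is an elementary
embedding `j : V → M` with `M` transitive, critical point `κ`, `j κ > lam` and `M`
closed under `lam`-sequences. -/
def IsSupercompactO (κ : Ordinal.{u}) : Prop :=
  IsInfCardO κ ∧
  ∀ lam : Ordinal.{u}, ∃ (M : ZFSet.{u} → Prop) (j : ZFSet.{u} → ZFSet.{u}) (k : ZFSet.{u}),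
    IsTransClass M ∧ IsElemEmbUniv M j ∧ IsCritPoint j k ∧ k.rank = κ ∧
    lam < (j k).rank ∧ SeqClosed M lam

/-- There is a proper class of supercompact cardinals. -/
def ProperClassSupercompact : Prop :=
  ∀ o : Ordinal.{u}, ∃ κ : Ordinal.{u}, o < κ ∧ IsSupercompactO κ

/-! ### `H(κ)` via transitive closures -/

/-- The transitive closure of a ZFC set, as a class. -/
def InTransClosure (x : ZFSet.{u}) : ZFSet.{u} → Prop :=
  fun y => ∃ n : ℕ, y ∈ (ZFSet.sUnion)^[n] x

/-- `x ∈ H(κ)`: the transitive closure of `x` has cardinality less than `κ`. -/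
def MemH (κ : Cardinal.{u}) (x : ZFSet.{u}) : Prop :=
  Cardinal.mk {y : ZFSet.{u} // InTransClosure x y} < Cardinal.lift.{u + 1} κ

/-! ### Rank-relativized elementarity, `C(n)` and `C(n)`-extendibility -/

/-- Membership in `V_o` for a (meta-level) ordinal `o`. -/
def MemV (o : Ordinal.{u}) (x : ZFSet.{u}) : Prop := x.rank < o

/-- `j` is an elementary embedding `V_lam → V_mu` (formulated via the rank
relativizations of satisfaction). -/
def VElemEmb (lam mu : Ordinal.{u}) (j : ZFSet.{u} → ZFSet.{u}) : Prop :=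
  (∀ x : ZFSet.{u}, x.rank < lam → (j x).rank < mu) ∧
  ∀ (φ : SetFml) (v : ℕ → ZFSet.{u}), (∀ n, (v n).rank < lam) →
    (φ.SatIn (MemV lam) v ↔ φ.SatIn (MemV mu) (fun n => j (v n)))

/-- `κ ∈ C(n)`: `κ` is an infinite cardinal and `V_κ` is a `Σₙ`-elementary
substructure of the universe `V`. -/
def CC (n : ℕ) (κ : Ordinal.{u}) : Prop :=
  IsInfCardO κ ∧
  ∀ (φ : SetFml), IsSigma n φ → ∀ v : ℕ → ZFSet.{u}, (∀ i, (v i).rank < κ) →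
    (φ.Sat v ↔ φ.SatIn (MemV κ) v)

/-- `κ` is `lam`-`P`-extendible (for a class `P` of ordinals): there is `mu` with
`P mu` and an elementary embedding `j : V_lam → V_mu` with critical point `κ`,
`j κ > lam` and `P (j κ)`. -/
def IsLamExtendibleFor (P : Ordinal.{u} → Prop) (κ lam : Ordinal.{u}) : Prop :=
  ∃ (mu : Ordinal.{u}) (j : ZFSet.{u} → ZFSet.{u}) (k : ZFSet.{u}),
    P mu ∧ VElemEmb lam mu j ∧ IsOrd k ∧ k.rank = κ ∧
    (∀ o : ZFSet.{u}, IsOrd o → o.rank < κ → j o = o) ∧ j k ≠ k ∧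
    lam < (j k).rank ∧ P ((j k).rank)

/-- `κ` is an extendible cardinal. -/
def IsExtendible (κ : Ordinal.{u}) : Prop :=
  IsInfCardO κ ∧ ∀ lam : Ordinal.{u}, IsInfCardO lam → κ < lam →
    IsLamExtendibleFor (fun _ => True) κ lam

/-- `κ` is a `C(n)`-extendible cardinal. -/
def IsCnExtendible (n : ℕ) (κ : Ordinal.{u}) : Prop :=
  CC n κ ∧ ∀ lam : Ordinal.{u}, CC n lam → κ < lam → IsLamExtendibleFor (CC n) κ lam

/-- There is a proper class of `C(n)`-extendible cardinals. -/
def ProperClassCnExtendible (n : ℕ) : Prop :=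
  ∀ o : Ordinal.{u}, ∃ κ : Ordinal.{u}, o < κ ∧ IsCnExtendible n κ

end ZFCMeta

/-!
Every ordinal lies below an infinite cardinal `λ` with `V_λ ≺ V` (closing under chosen witnesses
and applying the Tarski–Vaught test), so `λ ∈ C(n)` and `C(n)`-extendibility yields
`j : V_λ → V_μ` with `μ ∈ C(n)`, critical point `κ` and `λ < j(κ)`. Since `x.rank < s.rank` is
witnessed by certificates living in `V_λ`, `j(V_α) = V_{j(α)}`; hence `j` fixes `V_κ` pointwise
and `V_λ ⊆ j(V_κ)`.

Let `ψ` be downward absolute from `V` to every level in `C(n)` and let `ψ(v, xs)` hold with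
parameters `v ∈ V_κ`. Choosing `λ` above `xs`, `∃ ys ∈ j(V_κ), ψ(v, ys)` holds in `V_μ`; pulling
it back along `j` and up to `V` by `V_λ ≺ V` gives witnesses `ys ∈ V_κ`. For `ψ = ¬χ` with `χ`
in `Σₙ` this makes `Πₙ₊₁` formulas absolute between `V_κ` and `V`; for `ψ` in `Πₙ₊₁` it brings the
witnesses of `Σₙ₊₂` formulas down into `V_κ`.
-/

open scoped ZFSet

namespace ZFCMeta

/-! ### Assignments and free variables -/

@[simp] theorem push_zero (x : ZFSet.{u}) (v : ℕ → ZFSet.{u}) : push x v 0 = x := rfl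

@[simp] theorem push_succ (x : ZFSet.{u}) (v : ℕ → ZFSet.{u}) (i : ℕ) : push x v (i + 1) = v i :=
  rfl

theorem forall_push {P : ZFSet.{u} → Prop} {x : ZFSet.{u}} {v : ℕ → ZFSet.{u}} (hx : P x)
    (hv : ∀ i, P (v i)) : ∀ i, P (push x v i)
  | 0 => hx
  | i + 1 => hv i

theorem push_eq_push_of_lt {v w : ℕ → ZFSet.{u}} {B : ℕ} (h : ∀ i < B, v i = w i) (x : ZFSet.{u}) :
    ∀ i < B + 1, push x v i = push x w i
  | 0, _ => rfl
  | i + 1, hi => h i (by omega)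

/-- `pushList v [x₁, …, xₘ]` pushes `x₁` first, so `xₘ` ends up in slot `0`: this matches the
order of the quantifiers in `iterEx m` and `iterAll m`. -/
def pushList (v : ℕ → ZFSet.{u}) : List ZFSet.{u} → ℕ → ZFSet.{u}
  | [] => v
  | x :: xs => pushList (push x v) xs

theorem forall_pushList {P : ZFSet.{u} → Prop} (xs : List ZFSet.{u}) :
    ∀ {v : ℕ → ZFSet.{u}}, (∀ i, P (v i)) → (∀ x ∈ xs, P x) → ∀ i, P (pushList v xs i) := by
  induction xs with
  | nil => exact fun hv _ => hv
  | cons x xs ih =>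
    intro v hv hxs
    exact ih (forall_push (hxs x List.mem_cons_self) hv) fun y hy =>
      hxs y (List.mem_cons_of_mem x hy)

theorem pushList_eq_pushList_of_lt (xs : List ZFSet.{u}) :
    ∀ {v w : ℕ → ZFSet.{u}} {B : ℕ}, (∀ i < B, v i = w i) →
      ∀ i < B + xs.length, pushList v xs i = pushList w xs i := by
  induction xs with
  | nil => simp [pushList]
  | cons x xs ih =>
    intro v w B h i hi
    exact ih (push_eq_push_of_lt h x) i (by simp at hi; omega)

def SetFml.varBound : SetFml → ℕ
  | .mem i j | .eq i j => max i j + 1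
  | .not φ => φ.varBound
  | .and φ ψ | .or φ ψ => max φ.varBound ψ.varBound
  | .ex φ | .all φ => φ.varBound - 1
  | .bex k φ | .ball k φ => max (k + 1) (φ.varBound - 1)

theorem SetFml.satIn_congr (M : ZFSet.{u} → Prop) (φ : SetFml) :
    ∀ {v w : ℕ → ZFSet.{u}}, (∀ i < φ.varBound, v i = w i) → (φ.SatIn M v ↔ φ.SatIn M w) := by
  induction φ with
  | mem i j | eq i j =>
    intro v w h
    simp only [SetFml.SatIn, h i (by simp [varBound]), h j (by simp [varBound])]
  | not φ ih => exact fun h => not_congr (ih h)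
  | and φ ψ ih ih' =>
    exact fun h => and_congr (ih fun i hi => h i (by simp [varBound]; omega))
      (ih' fun i hi => h i (by simp [varBound]; omega))
  | or φ ψ ih ih' =>
    exact fun h => or_congr (ih fun i hi => h i (by simp [varBound]; omega))
      (ih' fun i hi => h i (by simp [varBound]; omega))
  | ex φ ih | all φ ih =>
    intro v w h
    have hpush (x : ZFSet.{u}) := ih fun i hi =>
      push_eq_push_of_lt (B := φ.varBound - 1) h x i (by omega)
    simp only [SetFml.SatIn, hpush]
  | bex k φ ih | ball k φ ih =>
    intro v w h
    have hpush (x : ZFSet.{u}) := ih fun i hi =>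
      push_eq_push_of_lt (B := φ.varBound - 1) (fun i hi => h i (by simp [varBound]; omega)) x i
        (by omega)
    simp only [SetFml.SatIn, hpush, h k (by simp [varBound])]

theorem exists_length_succ {α : Type*} {P : List α → Prop} {m : ℕ} :
    (∃ xs : List α, xs.length = m + 1 ∧ P xs) ↔
      ∃ x, ∃ xs : List α, xs.length = m ∧ P (x :: xs) := by
  constructor
  · rintro ⟨_ | ⟨x, xs⟩, hlen, h⟩
    · simp at hlen
    · exact ⟨x, xs, by simpa using hlen, h⟩
  · rintro ⟨x, xs, rfl, h⟩
    exact ⟨x :: xs, rfl, h⟩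

theorem forall_length_succ {α : Type*} {P : List α → Prop} {m : ℕ} :
    (∀ xs : List α, xs.length = m + 1 → P xs) ↔
      ∀ x, ∀ xs : List α, xs.length = m → P (x :: xs) := by
  simpa using (exists_length_succ (P := fun xs => ¬ P xs) (m := m)).not

theorem satIn_iterEx (M : ZFSet.{u} → Prop) (χ : SetFml) :
    ∀ (m : ℕ) (v : ℕ → ZFSet.{u}), (iterEx m χ).SatIn M v ↔
      ∃ xs : List ZFSet.{u}, xs.length = m ∧ (∀ x ∈ xs, M x) ∧ χ.SatIn M (pushList v xs)
  | 0, v => by simp [iterEx, pushList]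
  | m + 1, v => by
    simp only [iterEx, SetFml.SatIn, satIn_iterEx M χ m, exists_length_succ, List.forall_mem_cons,
      pushList]
    aesop

theorem satIn_iterAll (M : ZFSet.{u} → Prop) (χ : SetFml) :
    ∀ (m : ℕ) (v : ℕ → ZFSet.{u}), (iterAll m χ).SatIn M v ↔
      ∀ xs : List ZFSet.{u}, xs.length = m → (∀ x ∈ xs, M x) → χ.SatIn M (pushList v xs)
  | 0, v => by simp [iterAll, pushList]
  | m + 1, v => by
    simp only [iterAll, SetFml.SatIn, satIn_iterAll M χ m, forall_length_succ, List.forall_mem_cons,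
      pushList]
    aesop

/-- `∃ x₁ ∈ v N, …, ∃ xₘ ∈ v N, ψ`: the index of the bound grows with each binder, so that it
keeps pointing at the same set. -/
def bexBlock (N : ℕ) : ℕ → SetFml → SetFml
  | 0, ψ => ψ
  | m + 1, ψ => .bex N (bexBlock (N + 1) m ψ)

theorem satIn_bexBlock (M : ZFSet.{u} → Prop) (ψ : SetFml) :
    ∀ (m N : ℕ) (v : ℕ → ZFSet.{u}), (bexBlock N m ψ).SatIn M v ↔
      ∃ xs : List ZFSet.{u}, xs.length = m ∧ (∀ x ∈ xs, x ∈ v N) ∧ ψ.SatIn M (pushList v xs)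
  | 0, N, v => by simp [bexBlock, pushList]
  | m + 1, N, v => by
    simp only [bexBlock, SetFml.SatIn, satIn_bexBlock M ψ m (N + 1), push_succ, exists_length_succ,
      List.forall_mem_cons, pushList]
    aesop

theorem satIn_bexBlock_update (M : ZFSet.{u} → Prop) (ψ : SetFml) (m : ℕ) (v : ℕ → ZFSet.{u})
    (a : ZFSet.{u}) :
    (bexBlock ψ.varBound m ψ).SatIn M (Function.update v ψ.varBound a) ↔
      ∃ xs : List ZFSet.{u}, xs.length = m ∧ (∀ x ∈ xs, x ∈ a) ∧ ψ.SatIn M (pushList v xs) := by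
  rw [satIn_bexBlock, Function.update_self]
  refine exists_congr fun xs => and_congr_right fun _ => and_congr_right fun _ => ?_
  exact ψ.satIn_congr M fun i hi => pushList_eq_pushList_of_lt xs
    (fun i hi => Function.update_of_ne hi.ne _ _) i (by omega)

/-! ### Reflection -/

theorem IsInfCardO.isSuccLimit {κ : Ordinal.{u}} (h : IsInfCardO κ) : Order.IsSuccLimit κ := by
  obtain ⟨c, hc, rfl⟩ := h
  exact Cardinal.isSuccLimit_ord hc

theorem isTransClass_memV (lam : Ordinal.{u}) : IsTransClass (MemV lam) :=
  fun _ _ hx hy => (ZFSet.rank_lt_of_mem hy).trans hx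

theorem sat_iff_satIn_of_tarskiVaught {M : ZFSet.{u} → Prop} (hM : IsTransClass M)
    (hTV : ∀ (φ : SetFml) (w : ℕ → ZFSet.{u}), (∀ i, M (w i)) →
      (∃ x, φ.Sat (push x w)) → ∃ x, M x ∧ φ.Sat (push x w))
    (φ : SetFml) : ∀ {w : ℕ → ZFSet.{u}}, (∀ i, M (w i)) → (φ.Sat w ↔ φ.SatIn M w) := by
  induction φ with
  | mem | eq => exact fun _ => Iff.rfl
  | not φ ih => exact fun hw => not_congr (ih hw)
  | and φ ψ ih ih' => exact fun hw => and_congr (ih hw) (ih' hw)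
  | or φ ψ ih ih' => exact fun hw => or_congr (ih hw) (ih' hw)
  | ex φ ih =>
    intro w hw
    constructor
    · rintro ⟨x, -, hx⟩
      obtain ⟨y, hMy, hy⟩ := hTV φ w hw ⟨x, hx⟩
      exact ⟨y, hMy, (ih (forall_push hMy hw)).1 hy⟩
    · rintro ⟨x, hMx, hx⟩
      exact ⟨x, trivial, (ih (forall_push hMx hw)).2 hx⟩
  | all φ ih =>
    intro w hw
    constructor
    · exact fun h x hMx => (ih (forall_push hMx hw)).1 (h x trivial)
    · intro h x _
      by_contra hx
      obtain ⟨y, hMy, hy⟩ := hTV (.not φ) w hw ⟨x, hx⟩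
      exact hy ((ih (forall_push hMy hw)).2 (h y hMy))
  | bex k φ ih =>
    exact fun hw => exists_congr fun x => and_congr_right fun hx =>
      ih (forall_push (hM _ _ (hw k) hx) hw)
  | ball k φ ih =>
    exact fun hw => forall_congr' fun x => imp_congr_right fun hx =>
      ih (forall_push (hM _ _ (hw k) hx) hw)

theorem exists_isInfCardO_forall_lt (f : Ordinal.{u} → Ordinal.{u}) (o : Ordinal.{u}) :
    ∃ lam, o < lam ∧ IsInfCardO lam ∧ ∀ α < lam, f α < lam := by
  let g : Cardinal.{u} → Cardinal.{u} := fun c =>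
    Order.succ (c ⊔ ⨆ α : Set.Iio c.ord, (f α).card)
  let c : ℕ → Cardinal.{u} := fun k => g^[k] (Order.succ (Cardinal.aleph0 ⊔ o.card))
  have hc : ∀ k, c k ≤ ⨆ k, c k := le_ciSup (Cardinal.bddAbove_of_small)
  refine ⟨(⨆ k, c k).ord, ?_, ⟨_, (le_sup_left.trans (Order.le_succ _)).trans (hc 0), rfl⟩,
    fun α hα => ?_⟩
  · exact Cardinal.lt_ord.2 ((Order.lt_succ_of_le le_sup_right).trans_le (hc 0))
  · obtain ⟨k, hk⟩ := (lt_ciSup_iff (Cardinal.bddAbove_of_small)).1 (Cardinal.lt_ord.1 hα)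
    have hfα : (f α).card < c (k + 1) := by
      rw [show c (k + 1) = g (c k) from Function.iterate_succ_apply' g k _]
      exact Order.lt_succ_of_le (le_sup_of_le_right (le_ciSup Cardinal.bddAbove_of_small
        (⟨α, Cardinal.lt_ord.2 hk⟩ : Set.Iio (c k).ord)))
    exact Cardinal.lt_ord.2 (hfα.trans_le (hc (k + 1)))

/-- `V_lam ≺ V` for all formulas. -/
def IsElemLevel (lam : Ordinal.{u}) : Prop :=
  ∀ (φ : SetFml) (v : ℕ → ZFSet.{u}), (∀ i, (v i).rank < lam) → (φ.Sat v ↔ φ.SatIn (MemV lam) v)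

def skolemBound (α : Ordinal.{u}) : Ordinal.{u} :=
  ⨆ p : SetFml × (ℕ → V_ α),
    Order.succ (Classical.epsilon fun x => p.1.Sat (push x fun i => (p.2 i).1)).rank

theorem rank_epsilon_lt_skolemBound {α : Ordinal.{u}} (φ : SetFml) {w : ℕ → ZFSet.{u}}
    (hw : ∀ i, (w i).rank < α) :
    (Classical.epsilon fun x => φ.Sat (push x w)).rank < skolemBound α :=
  (Order.lt_succ _).trans_le <| Ordinal.le_iSup
    (fun p : SetFml × (ℕ → V_ α) =>
      Order.succ (Classical.epsilon fun x => p.1.Sat (push x fun i => (p.2 i).1)).rank)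
    (φ, fun i => ⟨w i, ZFSet.mem_vonNeumann.2 (hw i)⟩)

theorem exists_isElemLevel (o : Ordinal.{u}) :
    ∃ lam, o < lam ∧ IsInfCardO lam ∧ IsElemLevel lam := by
  obtain ⟨lam, hlt, hinf, hclosed⟩ := exists_isInfCardO_forall_lt skolemBound o
  have hlim := hinf.isSuccLimit
  refine ⟨lam, hlt, hinf, fun φ v hv =>
    sat_iff_satIn_of_tarskiVaught (isTransClass_memV lam) ?_ φ hv⟩
  intro φ w hw ⟨x, hx⟩
  -- Only the parameters below `φ.varBound` matter, and finitely many lie in some `V_α`, `α < lam`.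
  let B := φ.varBound
  let w' : ℕ → ZFSet.{u} := fun i => if i < B then w i else ∅
  let α := Order.succ ((Finset.range B).sup fun i => (w i).rank)
  have hα : α < lam := hlim.succ_lt ((Finset.sup_lt_iff hlim.bot_lt).2 fun i _ => hw i)
  have hw' : ∀ i, (w' i).rank < α := by
    intro i
    by_cases hi : i < B
    · simp only [w', if_pos hi]
      exact Order.lt_succ_of_le (Finset.le_sup (f := fun i => (w i).rank) (Finset.mem_range.2 hi))
    · simp [w', α, hi]
  have hagree (y : ZFSet.{u}) : φ.Sat (push y w') ↔ φ.Sat (push y w) :=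
    φ.satIn_congr _ fun i hi => push_eq_push_of_lt (fun i hi => if_pos hi) y i (by omega)
  exact ⟨_, (rank_epsilon_lt_skolemBound φ hw').trans (hclosed α hα),
    (hagree _).1 (Classical.epsilon_spec (p := fun y => φ.Sat (push y w')) ⟨x, (hagree x).2 hx⟩)⟩

/-! ### Rank certificates and the definability of `V_α` -/

/-- A certificate that `z.rank < s.rank` which, unlike the rank, can be checked by a bounded
formula (`rankCertFml`). -/
def RankCert (F z s : ZFSet.{u}) : Prop :=
  (∃ b ∈ s, ZFSet.pair z b ∈ F) ∧
    ∀ p b, ZFSet.pair p b ∈ F → ∀ q ∈ p, ∃ b' ∈ b, ZFSet.pair q b' ∈ F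

theorem RankCert.rank_lt {F z s : ZFSet.{u}} (h : RankCert F z s) : z.rank < s.rank := by
  have key (p : ZFSet.{u}) : ∀ b, ZFSet.pair p b ∈ F → p.rank ≤ b.rank := by
    induction p using ZFSet.inductionOn with
    | h p ih =>
      intro b hpb
      refine ZFSet.rank_le_iff.2 fun q hq => ?_
      obtain ⟨b', hb', hqb'⟩ := h.2 p b hpb q hq
      exact (ih q hq b' hqb').trans_lt (ZFSet.rank_lt_of_mem hb')
  obtain ⟨b, hb, hzb⟩ := h.1
  exact (key z b hzb).trans_lt (ZFSet.rank_lt_of_mem hb)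

theorem rank_pair_eq_succ_succ (p b : ZFSet.{u}) :
    (ZFSet.pair p b).rank = Order.succ (Order.succ (max p.rank b.rank)) := by
  simp only [ZFSet.pair, ZFSet.rank_pair, ZFSet.rank_singleton, Order.succ_max]
  exact max_eq_right (le_max_left _ _)

theorem exists_rankCert {lam : Ordinal.{u}} (hlam : Order.IsSuccLimit lam) {z s : ZFSet.{u}}
    (hs : s.rank < lam) (hzs : z.rank < s.rank) : ∃ F, F.rank < lam ∧ RankCert F z s := by
  let α := s.rank
  refine ⟨ZFSet.pairSep (fun p b => p.rank ≤ b.rank) (V_ α) (V_ α), ?_, ?_, ?_⟩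
  · refine lt_of_le_of_lt (ZFSet.rank_le_iff.2 fun t ht => ?_) (hlam.succ_lt (hlam.succ_lt hs))
    obtain ⟨p, hp, b, hb, rfl, -⟩ := ZFSet.mem_pairSep.1 ht
    rw [rank_pair_eq_succ_succ, Order.succ_lt_succ_iff, Order.succ_lt_succ_iff]
    exact max_lt (ZFSet.mem_vonNeumann.1 hp) (ZFSet.mem_vonNeumann.1 hb)
  · obtain ⟨b, hb, hzb⟩ := ZFSet.lt_rank_iff.1 hzs
    exact ⟨b, hb, ZFSet.mem_pairSep.2 ⟨z, ZFSet.mem_vonNeumann.2 hzs, b,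
      ZFSet.mem_vonNeumann.2 (ZFSet.rank_lt_of_mem hb), rfl, hzb⟩⟩
  · intro p b hpb q hq
    obtain ⟨p', hp, b', hb, hpair, hpb'⟩ := ZFSet.mem_pairSep.1 hpb
    obtain ⟨rfl, rfl⟩ := ZFSet.pair_injective hpair
    obtain ⟨b', hb', hqb'⟩ := ZFSet.lt_rank_iff.1 ((ZFSet.rank_lt_of_mem hq).trans_le hpb')
    exact ⟨b', hb', ZFSet.mem_pairSep.2 ⟨q, ZFSet.isTransitive_vonNeumann _ _ hp hq, b',
      ZFSet.isTransitive_vonNeumann _ _ hb hb', rfl, hqb'⟩⟩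

/-- `v s = {v p}` -/
def singletonFml (s p : ℕ) : SetFml :=
  .and (.mem p s) (.ball s (.eq 0 (p + 1)))

/-- `v s = {v p, v b}` -/
def doubletonFml (s p b : ℕ) : SetFml :=
  .and (.and (.mem p s) (.mem b s)) (.ball s (.or (.eq 0 (p + 1)) (.eq 0 (b + 1))))

/-- `v t = ZFSet.pair (v p) (v b)` -/
def pairFml (t p b : ℕ) : SetFml :=
  .and (.and (.bex t (singletonFml 0 (p + 1))) (.bex t (doubletonFml 0 (p + 1) (b + 1))))
    (.ball t (.or (singletonFml 0 (p + 1)) (doubletonFml 0 (p + 1) (b + 1))))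

theorem eq_singleton_iff_forall_mem {x a : ZFSet.{u}} : x = {a} ↔ a ∈ x ∧ ∀ y ∈ x, y = a := by
  constructor
  · rintro rfl
    simp
  · rintro ⟨ha, h⟩
    exact ZFSet.ext fun y => ⟨fun hy => ZFSet.mem_singleton.2 (h y hy),
      fun hy => ZFSet.mem_singleton.1 hy ▸ ha⟩

theorem eq_doubleton_iff_forall_mem {x a b : ZFSet.{u}} :
    x = {a, b} ↔ (a ∈ x ∧ b ∈ x) ∧ ∀ y ∈ x, y = a ∨ y = b := by
  constructor
  · rintro rfl
    simp
  · rintro ⟨⟨ha, hb⟩, h⟩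
    exact ZFSet.ext fun y => ⟨fun hy => ZFSet.mem_pair.2 (h y hy),
      fun hy => by rcases ZFSet.mem_pair.1 hy with rfl | rfl <;> assumption⟩

theorem eq_pair_iff_forall_mem {t a b : ZFSet.{u}} :
    t = ZFSet.pair a b ↔ ((∃ x ∈ t, x = {a}) ∧ ∃ x ∈ t, x = {a, b}) ∧
      ∀ x ∈ t, x = {a} ∨ x = {a, b} := by
  have hmem (x : ZFSet.{u}) : x ∈ ZFSet.pair a b ↔ x = {a} ∨ x = {a, b} := by
    simp [ZFSet.pair]
  constructor
  · rintro rfl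
    exact ⟨⟨⟨_, (hmem _).2 (Or.inl rfl), rfl⟩, ⟨_, (hmem _).2 (Or.inr rfl), rfl⟩⟩,
      fun x => (hmem x).1⟩
  · rintro ⟨⟨⟨_, h1, rfl⟩, ⟨_, h2, rfl⟩⟩, h⟩
    exact ZFSet.ext fun x => ⟨fun hx => (hmem x).2 (h x hx),
      fun hx => by rcases (hmem x).1 hx with rfl | rfl <;> assumption⟩

theorem satIn_pairFml (M : ZFSet.{u} → Prop) (t p b : ℕ) (v : ℕ → ZFSet.{u}) :
    (pairFml t p b).SatIn M v ↔ v t = ZFSet.pair (v p) (v b) := by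
  simp only [pairFml, singletonFml, doubletonFml, SetFml.SatIn, push_zero, push_succ,
    ← eq_singleton_iff_forall_mem, ← eq_doubleton_iff_forall_mem, ← eq_pair_iff_forall_mem]

/-- The components of the pairs are reached through the pairs themselves, so that every
quantifier is bounded. -/
def rankCertFml : SetFml :=
  .and (.bex 3 (.bex 1 (pairFml 0 3 1)))
    (.ball 0 (.ball 0 (.ball 0 (.ball 2 (.ball 0 (.or (.not (pairFml 4 2 0))
      (.ball 2 (.bex 1 (.bex 7 (pairFml 0 2 1))))))))))

theorem satIn_rankCertFml (M : ZFSet.{u} → Prop) (v : ℕ → ZFSet.{u}) :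
    rankCertFml.SatIn M v ↔ RankCert (v 0) (v 1) (v 3) := by
  simp only [rankCertFml, SetFml.SatIn, satIn_pairFml, push_zero, push_succ, RankCert,
    exists_eq_right, ← imp_iff_not_or]
  refine and_congr_right fun _ => ⟨fun h p b hpb => ?_, ?_⟩
  · exact h _ hpb {p} (by simp [ZFSet.pair]) p (ZFSet.mem_singleton.2 rfl) {p, b}
      (by simp [ZFSet.pair]) b (ZFSet.mem_pair.2 (Or.inr rfl)) rfl
  · rintro h t ht - - p - - - b - rfl
    exact h p b ht

def vonNeumannFml : SetFml :=
  .and (.ball 0 (.ex rankCertFml)) (.all (.or (.not (.ex rankCertFml)) (.mem 0 1)))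

theorem satIn_vonNeumannFml {lam : Ordinal.{u}} (hlam : Order.IsSuccLimit lam)
    {y s : ZFSet.{u}} (hs : s.rank < lam) :
    vonNeumannFml.SatIn (MemV lam) (push y fun _ => s) ↔ y = V_ s.rank := by
  simp only [vonNeumannFml, SetFml.SatIn, satIn_rankCertFml, push_zero, push_succ, MemV]
  constructor
  · rintro ⟨hsub, hsup⟩
    refine ZFSet.ext fun t => ?_
    rw [ZFSet.mem_vonNeumann]
    refine ⟨fun ht => ?_, fun ht => ?_⟩
    · obtain ⟨F, -, hF⟩ := hsub t ht
      exact hF.rank_lt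
    · exact (hsup t (ht.trans hs)).resolve_left (not_not.2 (exists_rankCert hlam hs ht))
  · rintro rfl
    refine ⟨fun t ht => exists_rankCert hlam hs (ZFSet.mem_vonNeumann.1 ht), fun z _ => ?_⟩
    refine or_iff_not_imp_left.2 fun hz => ZFSet.mem_vonNeumann.2 ?_
    obtain ⟨F, -, hF⟩ := not_not.1 hz
    exact hF.rank_lt

/-! ### Elementary embeddings between rank initial segments -/

theorem comp_push (j : ZFSet.{u} → ZFSet.{u}) (x : ZFSet.{u}) (v : ℕ → ZFSet.{u}) :
    (fun i => j (push x v i)) = push (j x) fun i => j (v i) := by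
  funext i
  cases i <;> rfl

section VElemEmb

variable {lam mu : Ordinal.{u}} {j : ZFSet.{u} → ZFSet.{u}}

theorem VElemEmb.mem_iff (hj : VElemEmb lam mu j) {x y : ZFSet.{u}} (hx : x.rank < lam)
    (hy : y.rank < lam) : j x ∈ j y ↔ x ∈ y :=
  (hj.2 (.mem 0 1) (push x fun _ => y)
    (forall_push (P := fun x => x.rank < lam) hx fun _ => hy)).symm

theorem VElemEmb.subset (hj : VElemEmb lam mu j) {x y : ZFSet.{u}} (hx : x.rank < lam)
    (hy : y.rank < lam) (hxy : x ⊆ y) : j x ⊆ j y := fun z hz =>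
  (hj.2 (.ball 0 (.mem 0 2)) (push x fun _ => y)
    (forall_push (P := fun x => x.rank < lam) hx fun _ => hy)).1 (fun _ h => hxy h) z hz

theorem VElemEmb.map_vonNeumann (hj : VElemEmb lam mu j) (hlam : Order.IsSuccLimit lam)
    (hmu : Order.IsSuccLimit mu) {s : ZFSet.{u}} (hs : s.rank < lam) :
    j (V_ s.rank) = V_ (j s).rank := by
  have hv := forall_push (P := fun x => x.rank < lam) (x := V_ s.rank)
    (by rwa [ZFSet.rank_vonNeumann]) fun _ => hs
  have hsat := (hj.2 vonNeumannFml _ hv).1 ((satIn_vonNeumannFml hlam hs).2 rfl)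
  rw [comp_push] at hsat
  exact (satIn_vonNeumannFml hmu (hj.1 s hs)).1 hsat

theorem VElemEmb.eq_self_of_rank_lt (hj : VElemEmb lam mu j) (hlam : Order.IsSuccLimit lam)
    (hmu : Order.IsSuccLimit mu) {κ : Ordinal.{u}} (hκ : κ < lam)
    (hfix : ∀ o : ZFSet.{u}, IsOrd o → o.rank < κ → j o = o) {x : ZFSet.{u}}
    (hx : x.rank < κ) : j x = x := by
  have hV (β : Ordinal.{u}) (hβ : β < κ) : j (V_ β) = V_ β := by
    have h := hj.map_vonNeumann hlam hmu (s := β.toZFSet) (by simpa using hβ.trans hκ)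
    rwa [hfix _ (ZFSet.isOrdinal_iff_forall_mem_isTransitive.1 (ZFSet.isOrdinal_toZFSet β))
      (by rwa [Ordinal.rank_toZFSet]), Ordinal.rank_toZFSet] at h
  refine (InvImage.wf ZFSet.rank wellFounded_lt).induction (C := fun x => x.rank < κ → j x = x) x
    (fun x ih hx => ?_) hx
  have hxlam := hx.trans hκ
  have hfix_lt (z : ZFSet.{u}) (hz : z.rank < x.rank) : j z = z := ih z hz (hz.trans hx)
  refine ZFSet.ext fun z => ⟨fun hz => ?_, fun hz => ?_⟩
  · have hzV : z ∈ V_ x.rank := hV _ hx ▸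
      hj.subset hxlam (by rwa [ZFSet.rank_vonNeumann]) (ZFSet.subset_vonNeumann_self x) hz
    have hzx := ZFSet.mem_vonNeumann.1 hzV
    rwa [← hj.mem_iff (hzx.trans hxlam) hxlam, hfix_lt z hzx]
  · have hzx := ZFSet.rank_lt_of_mem hz
    rw [← hfix_lt z hzx]
    exact (hj.mem_iff (hzx.trans hxlam) hxlam).2 hz

end VElemEmb

theorem IsCnExtendible.exists_elemEmb {n : ℕ} {κ : Ordinal.{u}} (h : IsCnExtendible n κ)
    (θ : Ordinal.{u}) :
    ∃ (lam mu : Ordinal.{u}) (j : ZFSet.{u} → ZFSet.{u}), θ < lam ∧ κ < lam ∧ IsElemLevel lam ∧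
      CC n mu ∧ VElemEmb lam mu j ∧ (∀ x : ZFSet.{u}, x.rank < κ → j x = x) ∧
      ∀ x : ZFSet.{u}, x.rank < lam → x ∈ j (V_ κ) := by
  obtain ⟨lam, hlt, hinf, hlam⟩ := exists_isElemLevel (max θ κ)
  have hκ : κ < lam := (le_max_right θ κ).trans_lt hlt
  obtain ⟨mu, j, k, hmu, hj, -, rfl, hfix, -, hjk, -⟩ := h.2 lam ⟨hinf, fun φ _ => hlam φ⟩ hκ
  have hlim := hinf.isSuccLimit
  have hmu_lim := hmu.1.isSuccLimit
  refine ⟨lam, mu, j, (le_max_left θ _).trans_lt hlt, hκ, hlam, hmu, hj,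
    fun x hx => hj.eq_self_of_rank_lt hlim hmu_lim hκ hfix hx, fun x hx => ?_⟩
  rw [hj.map_vonNeumann hlim hmu_lim hκ, ZFSet.mem_vonNeumann]
  exact hx.trans hjk

/-! ### Absoluteness between `V_κ` and `V` -/

def DownwardAbsolute (P : Ordinal.{u} → Prop) (ψ : SetFml) : Prop :=
  ∀ μ, P μ → ∀ w : ℕ → ZFSet.{u}, (∀ i, (w i).rank < μ) → ψ.Sat w → ψ.SatIn (MemV μ) w

theorem downwardAbsolute_of_isSigma {n : ℕ} {χ : SetFml} (hχ : IsSigma n χ) :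
    DownwardAbsolute (CC.{u} n) χ :=
  fun _ hμ w hw => (hμ.2 χ hχ w hw).1

theorem downwardAbsolute_not_of_isSigma {n : ℕ} {χ : SetFml} (hχ : IsSigma n χ) :
    DownwardAbsolute (CC.{u} n) (.not χ) :=
  fun _ hμ w hw => mt (hμ.2 χ hχ w hw).2

theorem DownwardAbsolute.iterAll {P : Ordinal.{u} → Prop} {ψ : SetFml}
    (hψ : DownwardAbsolute P ψ) (m : ℕ) : DownwardAbsolute P (iterAll m ψ) := by
  intro μ hμ w hw h
  rw [SetFml.Sat, satIn_iterAll] at h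
  rw [satIn_iterAll]
  exact fun xs hlen hxs => hψ μ hμ _ (forall_pushList xs hw hxs) (h xs hlen fun _ _ => trivial)

section CnExtendible

variable {n : ℕ} {κ : Ordinal.{u}}

theorem IsCnExtendible.exists_rank_lt_of_sat (h : IsCnExtendible n κ) {ψ : SetFml}
    (hψ : DownwardAbsolute (CC.{u} n) ψ) {v : ℕ → ZFSet.{u}} (hv : ∀ i, (v i).rank < κ)
    {xs : List ZFSet.{u}} (hxs : ψ.Sat (pushList v xs)) :
    ∃ ys : List ZFSet.{u}, ys.length = xs.length ∧ (∀ y ∈ ys, y.rank < κ) ∧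
      ψ.Sat (pushList v ys) := by
  obtain ⟨lam, mu, j, hθ, hκ, hlam, hmu, hj, hfix, hmem⟩ :=
    h.exists_elemEmb (xs.map ZFSet.rank).sum
  have hxs_lam (x : ZFSet.{u}) (hx : x ∈ xs) : x.rank < lam :=
    (List.le_sum_of_mem (List.mem_map_of_mem hx)).trans_lt hθ
  let w := Function.update v ψ.varBound (V_ κ)
  have hw : ∀ i, (w i).rank < lam := by
    intro i
    rcases eq_or_ne i ψ.varBound with rfl | hi
    · simpa [w] using hκ
    · simpa [w, hi] using (hv i).trans hκ
  have hjw : (fun i => j (w i)) = Function.update v ψ.varBound (j (V_ κ)) := by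
    funext i
    rw [Function.apply_update (fun _ => j)]
    congr
    exact funext fun i => hfix _ (hv i)
  have hjVκ : (j (V_ κ)).rank < mu := by simpa [w] using hj.1 _ (hw ψ.varBound)
  -- `j` fixes `v`, so it sends `∃ ys ∈ V_κ, ψ(v, ys)` to `∃ ys ∈ j(V_κ), ψ(v, ys)`, which `xs`
  -- witnesses in `V_μ`.
  have hsat_mu : (bexBlock ψ.varBound xs.length ψ).SatIn (MemV mu) fun i => j (w i) := by
    rw [hjw, satIn_bexBlock_update]
    refine ⟨xs, rfl, fun x hx => hmem x (hxs_lam x hx), hψ mu hmu _ ?_ hxs⟩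
    refine forall_pushList xs (fun i => ?_) fun x hx =>
      (ZFSet.rank_lt_of_mem (hmem x (hxs_lam x hx))).trans hjVκ
    rw [← hfix _ (hv i)]
    exact hj.1 _ ((hv i).trans hκ)
  obtain ⟨ys, hlen, hys, hsat⟩ := (satIn_bexBlock_update _ ψ _ v _).1 ((hj.2 _ w hw).2 hsat_mu)
  have hysκ (y : ZFSet.{u}) (hy : y ∈ ys) : y.rank < κ := ZFSet.mem_vonNeumann.1 (hys y hy)
  exact ⟨ys, hlen, hysκ, (hlam ψ _ (forall_pushList ys (fun i => (hv i).trans hκ)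
    fun y hy => (hysκ y hy).trans hκ)).2 hsat⟩

theorem IsCnExtendible.satIn_iterAll_iff (h : IsCnExtendible n κ) {χ : SetFml}
    (hχ : IsSigma n χ) (m : ℕ) {w : ℕ → ZFSet.{u}} (hw : ∀ i, (w i).rank < κ) :
    (iterAll m χ).SatIn (MemV κ) w ↔ (iterAll m χ).Sat w := by
  refine ⟨fun hκ => ?_, (downwardAbsolute_of_isSigma hχ).iterAll m κ h.1 w hw⟩
  rw [satIn_iterAll] at hκ
  rw [SetFml.Sat, satIn_iterAll]
  intro xs hlen _
  by_contra hxs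
  obtain ⟨ys, hys, hysκ, hys_sat⟩ :=
    h.exists_rank_lt_of_sat (downwardAbsolute_not_of_isSigma hχ) hw (xs := xs) hxs
  exact hys_sat ((h.1.2 χ hχ _ (forall_pushList ys hw hysκ)).2 (hκ ys (hys.trans hlen) hysκ))

end CnExtendible

/-- **Lemma.**  For every `n < ω`, if `κ` is a `C(n)`-extendible cardinal, then
`κ ∈ C(n+2)`, i.e. `V_κ` is a `Σ_{n+2}`-elementary substructure of `V`. -/
theorem CnExtendible_mem_Cn_add_two (n : ℕ) (κ : Ordinal.{u})
    (h : IsCnExtendible n κ) : CC (n + 2) κ := by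
  refine ⟨h.1.1, fun φ hφ v hv => ?_⟩
  obtain ⟨m, _, ⟨m', χ, hχ, rfl⟩, rfl⟩ := hφ
  rw [SetFml.Sat, satIn_iterEx, satIn_iterEx]
  constructor
  · rintro ⟨xs, hlen, -, hxs⟩
    obtain ⟨ys, hys, hysκ, hsat⟩ :=
      h.exists_rank_lt_of_sat ((downwardAbsolute_of_isSigma hχ).iterAll m') hv hxs
    exact ⟨ys, hys.trans hlen, hysκ,
      (h.satIn_iterAll_iff hχ m' (forall_pushList ys hv hysκ)).2 hsat⟩
  · rintro ⟨xs, hlen, hxsκ, hxs⟩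
    exact ⟨xs, hlen, fun _ _ => trivial,
      (h.satIn_iterAll_iff hχ m' (forall_pushList xs hv hxsκ)).1 hxs⟩

end ZFCMeta
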